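/- Let G be a K_{2,3}-induced-minor-free graph, r a vertex, and H the output of the cluster-rewiring algorithm on (G, r). Then for every edge xy of G, dist_H(x,y) ≤ 16. -/

import Mathlib

open SimpleGraph

namespace Paper

variable {V : Type}

/-- `u` and `v` are connected in `G` after deleting the vertex set `B`. -/
def ConnOutside (G : SimpleGraph V) (B : Set V) (u v : V) : Prop :=
  ∃ (hu : u ∈ Bᶜ) (hv : v ∈ Bᶜ), (G.induce Bᶜ).Reachable ⟨u, hu⟩ ⟨v, hv⟩

/-- `C` is an `(a,b)`-cutset of `G`. -/
def IsSep (G : SimpleGraph V) (a b : V) (C : Set V) : Prop :=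
  a ∉ C ∧ b ∉ C ∧ ¬ ConnOutside G C a b

/-- `C` is a minimal `(a,b)`-cutset of `G`. -/
def IsMinSep (G : SimpleGraph V) (a b : V) (C : Set V) : Prop :=
  IsSep G a b C ∧ ∀ C' ⊂ C, ¬ IsSep G a b C'

/-- `S` is a cluster of the layering partition of `G` rooted at `r`, at level `k`:
a maximal set of vertices at distance exactly `k` from `r`, any two of which are
connected in `G` minus the ball of radius `k-1` around `r`. -/
def IsCluster (G : SimpleGraph V) (r : V) (k : ℕ) (S : Set V) : Prop :=
  S.Nonempty ∧ (∀ v ∈ S, G.dist r v = k) ∧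
  (∀ u ∈ S, ∀ v ∈ S, ConnOutside G {w | G.dist r w < k} u v) ∧
  ∀ S', S ⊆ S' → (∀ v ∈ S', G.dist r v = k) →
    (∀ u ∈ S', ∀ v ∈ S', ConnOutside G {w | G.dist r w < k} u v) → S' ⊆ S

/-- The parent set of a cluster `S` at level `k`: vertices at distance `k-1` from `r`
adjacent to some vertex of `S`. -/
def parentSet (G : SimpleGraph V) (r : V) (k : ℕ) (S : Set V) : Set V :=
  {v | G.dist r v = k - 1 ∧ ∃ u ∈ S, G.Adj v u}

/-- `G` has no `K_{2,3}` induced minor. -/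
def K23Free (G : SimpleGraph V) : Prop :=
  ¬ ∃ φ : Fin 2 ⊕ Fin 3 → Set V,
      (∀ w, (φ w).Nonempty) ∧ (∀ w, (G.induce (φ w)).Connected) ∧
      (Pairwise fun a b => Disjoint (φ a) (φ b)) ∧
      (∀ a b, a ≠ b →
        ((completeBipartiteGraph (Fin 2) (Fin 3)).Adj a b ↔
          ∃ u ∈ φ a, ∃ v ∈ φ b, G.Adj u v))

/-- `G` contains a theta as an induced subgraph. -/
def HasTheta (G : SimpleGraph V) : Prop :=
  ∃ (a b : V) (p₁ p₂ p₃ : G.Walk a b),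
    p₁.IsPath ∧ p₂.IsPath ∧ p₃.IsPath ∧
    2 ≤ p₁.length ∧ 2 ≤ p₂.length ∧ 2 ≤ p₃.length ∧
    (∀ v, v ∈ p₁.support → v ∈ p₂.support → v = a ∨ v = b) ∧
    (∀ v, v ∈ p₁.support → v ∈ p₃.support → v = a ∨ v = b) ∧
    (∀ v, v ∈ p₂.support → v ∈ p₃.support → v = a ∨ v = b) ∧
    ∀ u v, u ∈ p₁.support ++ p₂.support ++ p₃.support →
      v ∈ p₁.support ++ p₂.support ++ p₃.support →
      (G.Adj u v ↔ s(u, v) ∈ p₁.edges ++ p₂.edges ++ p₃.edges)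

/-- `G` contains a pyramid as an induced subgraph. -/
def HasPyramid (G : SimpleGraph V) : Prop :=
  ∃ (a b₁ b₂ b₃ : V) (p₁ : G.Walk a b₁) (p₂ : G.Walk a b₂) (p₃ : G.Walk a b₃),
    p₁.IsPath ∧ p₂.IsPath ∧ p₃.IsPath ∧
    G.Adj b₁ b₂ ∧ G.Adj b₂ b₃ ∧ G.Adj b₁ b₃ ∧
    1 ≤ p₁.length ∧ 1 ≤ p₂.length ∧ 1 ≤ p₃.length ∧
    ((2 ≤ p₁.length ∧ 2 ≤ p₂.length) ∨ (2 ≤ p₁.length ∧ 2 ≤ p₃.length) ∨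
      (2 ≤ p₂.length ∧ 2 ≤ p₃.length)) ∧
    (∀ v, v ∈ p₁.support → v ∈ p₂.support → v = a) ∧
    (∀ v, v ∈ p₁.support → v ∈ p₃.support → v = a) ∧
    (∀ v, v ∈ p₂.support → v ∈ p₃.support → v = a) ∧
    ∀ u v, u ∈ p₁.support ++ p₂.support ++ p₃.support →
      v ∈ p₁.support ++ p₂.support ++ p₃.support →
      (G.Adj u v ↔ s(u, v) ∈ p₁.edges ++ p₂.edges ++ p₃.edges ∨
        s(u, v) ∈ [s(b₁, b₂), s(b₂, b₃), s(b₁, b₃)])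

/-- The common part of the definition of an (induced) prism in `G`. -/
def PrismWitness (G : SimpleGraph V) (a₁ a₂ a₃ b₁ b₂ b₃ : V)
    (p₁ : G.Walk a₁ b₁) (p₂ : G.Walk a₂ b₂) (p₃ : G.Walk a₃ b₃) : Prop :=
  p₁.IsPath ∧ p₂.IsPath ∧ p₃.IsPath ∧
  G.Adj a₁ a₂ ∧ G.Adj a₂ a₃ ∧ G.Adj a₁ a₃ ∧
  G.Adj b₁ b₂ ∧ G.Adj b₂ b₃ ∧ G.Adj b₁ b₃ ∧
  (∀ v, v ∈ p₁.support → v ∉ p₂.support) ∧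
  (∀ v, v ∈ p₁.support → v ∉ p₃.support) ∧
  (∀ v, v ∈ p₂.support → v ∉ p₃.support) ∧
  ∀ u v, u ∈ p₁.support ++ p₂.support ++ p₃.support →
    v ∈ p₁.support ++ p₂.support ++ p₃.support →
    (G.Adj u v ↔ s(u, v) ∈ p₁.edges ++ p₂.edges ++ p₃.edges ∨
      s(u, v) ∈ [s(a₁, a₂), s(a₂, a₃), s(a₁, a₃), s(b₁, b₂), s(b₂, b₃), s(b₁, b₃)])

/-- `G` contains a prism as an induced subgraph. -/
def HasPrism (G : SimpleGraph V) : Prop :=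
  ∃ (a₁ a₂ a₃ b₁ b₂ b₃ : V) (p₁ : G.Walk a₁ b₁) (p₂ : G.Walk a₂ b₂) (p₃ : G.Walk a₃ b₃),
    PrismWitness G a₁ a₂ a₃ b₁ b₂ b₃ p₁ p₂ p₃

/-- `G` contains a long prism (at least one path of length ≥ 2) as an induced subgraph. -/
def HasLongPrism (G : SimpleGraph V) : Prop :=
  ∃ (a₁ a₂ a₃ b₁ b₂ b₃ : V) (p₁ : G.Walk a₁ b₁) (p₂ : G.Walk a₂ b₂) (p₃ : G.Walk a₃ b₃),
    PrismWitness G a₁ a₂ a₃ b₁ b₂ b₃ p₁ p₂ p₃ ∧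
    (2 ≤ p₁.length ∨ 2 ≤ p₂.length ∨ 2 ≤ p₃.length)

/-- `c` is an induced cycle (hole when length ≥ 4) of `G`. -/
def IsInducedCycle (G : SimpleGraph V) {v : V} (c : G.Walk v v) : Prop :=
  c.IsCycle ∧ ∀ x ∈ c.support, ∀ y ∈ c.support, (G.Adj x y ↔ s(x, y) ∈ c.edges)

/-- `p` is an induced path of `G`. -/
def IsInducedPath (G : SimpleGraph V) {a b : V} (p : G.Walk a b) : Prop :=
  p.IsPath ∧ ∀ u ∈ p.support, ∀ v ∈ p.support, (G.Adj u v ↔ s(u, v) ∈ p.edges)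

/-- `G` contains a wheel: a hole together with a vertex having ≥ 3 neighbours on it. -/
def HasWheel (G : SimpleGraph V) : Prop :=
  ∃ (v x : V) (c : G.Walk v v), IsInducedCycle G c ∧ 4 ≤ c.length ∧ x ∉ c.support ∧
    ∃ y₁ y₂ y₃, y₁ ≠ y₂ ∧ y₁ ≠ y₃ ∧ y₂ ≠ y₃ ∧
      y₁ ∈ c.support ∧ y₂ ∈ c.support ∧ y₃ ∈ c.support ∧
      G.Adj x y₁ ∧ G.Adj x y₂ ∧ G.Adj x y₃

/-- A sector of a wheel with rim `c` and centre `x`: a path contained in the rim whose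
end-vertices are neighbours of `x` and whose internal vertices are not. -/
def IsSector (G : SimpleGraph V) {v : V} (c : G.Walk v v) (x : V) {s t : V}
    (q : G.Walk s t) : Prop :=
  q.IsPath ∧ (∀ e ∈ q.edges, e ∈ c.edges) ∧ G.Adj x s ∧ G.Adj x t ∧
  ∀ w ∈ q.support, w ≠ s → w ≠ t → ¬ G.Adj x w

/-- `G` contains a broken wheel: a wheel with at least two sectors of length ≥ 2. -/
def HasBrokenWheel (G : SimpleGraph V) : Prop :=
  ∃ (v x : V) (c : G.Walk v v), IsInducedCycle G c ∧ 4 ≤ c.length ∧ x ∉ c.support ∧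
    (∃ y₁ y₂ y₃, y₁ ≠ y₂ ∧ y₁ ≠ y₃ ∧ y₂ ≠ y₃ ∧
      y₁ ∈ c.support ∧ y₂ ∈ c.support ∧ y₃ ∈ c.support ∧
      G.Adj x y₁ ∧ G.Adj x y₂ ∧ G.Adj x y₃) ∧
    ∃ (s₁ t₁ s₂ t₂ : V) (q₁ : G.Walk s₁ t₁) (q₂ : G.Walk s₂ t₂),
      IsSector G c x q₁ ∧ IsSector G c x q₂ ∧ 2 ≤ q₁.length ∧ 2 ≤ q₂.length ∧
      ∀ w, w ∈ q₁.support → w ∈ q₂.support → G.Adj x w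

/-- A universally signable graph: no theta, pyramid, prism, or wheel induced subgraph. -/
def UniversallySignable (G : SimpleGraph V) : Prop :=
  ¬ HasTheta G ∧ ¬ HasPyramid G ∧ ¬ HasPrism G ∧ ¬ HasWheel G

/-- `G` has tree-width at most `w`. -/
def TreewidthLe (G : SimpleGraph V) (w : ℕ) : Prop :=
  ∃ (ι : Type) (T : SimpleGraph ι) (bag : ι → Set V),
    T.IsTree ∧
    (∀ v, ∃ i, v ∈ bag i) ∧
    (∀ u v, G.Adj u v → ∃ i, u ∈ bag i ∧ v ∈ bag i) ∧
    (∀ v, (T.induce {i | v ∈ bag i}).Connected) ∧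
    (∀ i, (bag i).ncard ≤ w + 1)

/-- The strong isometric path complexity of `G` is at most `s`: for every vertex `v`,
every isometric path of `G` can be vertex-covered by at most `s` isometric paths
rooted at `v`. -/
def SipcoLe (G : SimpleGraph V) (s : ℕ) : Prop :=
  ∀ v : V, ∀ ⦃x y : V⦄ (p : G.Walk x y), p.length = G.dist x y →
    ∃ n : ℕ, n ≤ s ∧ ∃ (e : Fin n → V) (Q : ∀ i, G.Walk v (e i)),
      (∀ i, (Q i).length = G.dist v (e i)) ∧
      ∀ z ∈ p.support, ∃ i, z ∈ (Q i).support

/-- The strong isometric path complexity of `G`. -/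
noncomputable def sipco (G : SimpleGraph V) : ℕ := sInf {s | SipcoLe G s}

/-- `P` induces exactly two connected components `C₁`, `C₂` in `G`. -/
def SplitsTwo (G : SimpleGraph V) (P C₁ C₂ : Set V) : Prop :=
  C₁ ∪ C₂ = P ∧ Disjoint C₁ C₂ ∧ C₁.Nonempty ∧ C₂.Nonempty ∧
  (G.induce C₁).Connected ∧ (G.induce C₂).Connected ∧
  ∀ u ∈ C₁, ∀ v ∈ C₂, ¬ G.Adj u v

/-- The star of edges joining each vertex of `D` to `w`. -/
def starEdges (w : V) (D : Set V) : Set (Sym2 V) := {e | ∃ v ∈ D, e = s(v, w)}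

/-- Vertices of `S` with a `G`-neighbour in `C`. -/
def Dset (G : SimpleGraph V) (S C : Set V) : Set V := {u ∈ S | ∃ v ∈ C, G.Adj u v}

/-- Admissible edge sets `E` produced by Algorithm 1 when processing a cluster `S`
with parent set `P`. -/
def ClusterEdges (G : SimpleGraph V) (S P : Set V) (E : Set (Sym2 V)) : Prop :=
  ((G.induce P).Connected ∧ ∃ w ∈ P, E = starEdges w S) ∨
  ∃ C₁ C₂, SplitsTwo G P C₁ C₂ ∧ ∃ w₁ ∈ C₁, ∃ w₂ ∈ C₂,
    ((Dset G S C₁ ∩ Dset G S C₂ = ∅ ∧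
       ((¬ (∃ u ∈ Dset G S C₁, ∃ v ∈ Dset G S C₂, G.Adj u v) ∧
          E = starEdges w₁ (Dset G S C₁) ∪ starEdges w₂ (Dset G S C₂)) ∨
        (∃ u ∈ Dset G S C₁, ∃ v ∈ Dset G S C₂, G.Adj u v ∧
          E = starEdges w₁ (Dset G S C₁) ∪ starEdges w₂ (Dset G S C₂) ∪ {s(u, v)})))
     ∨
     ((Dset G S C₁ ∩ Dset G S C₂).Nonempty ∧
       ∃ u ∈ Dset G S C₁ ∩ Dset G S C₂,
         E = starEdges w₁ (Dset G S C₁) ∪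
             starEdges w₂ (Dset G S C₂ \ Dset G S C₁) ∪ {s(u, w₂)}))

/-- `H` is a possible output of the cluster-rewiring algorithm (Algorithm 1) on `(G, r)`. -/
def IsAlgoOutput (G : SimpleGraph V) (r : V) (H : SimpleGraph V) : Prop :=
  ∃ f : Set V → Set (Sym2 V),
    (∀ S k, 1 ≤ k → IsCluster G r k S → ClusterEdges G S (parentSet G r k S) (f S)) ∧
    H.edgeSet = ⋃ S ∈ {S : Set V | ∃ k, 1 ≤ k ∧ IsCluster G r k S}, f S

/-- The type of clusters of the layering partition of `G` rooted at `r`. -/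
def ClusterType (G : SimpleGraph V) (r : V) : Type := {S : Set V // ∃ k, IsCluster G r k S}

/-- The layering tree: clusters, adjacent when `G` has an edge between them. -/
def layeringTree (G : SimpleGraph V) (r : V) : SimpleGraph (ClusterType G r) :=
  SimpleGraph.fromRel (fun S T => ∃ u ∈ S.1, ∃ v ∈ T.1, G.Adj u v)

/-- `A` is a connected component of `G - C`. -/
def IsCompOf (G : SimpleGraph V) (C A : Set V) : Prop :=
  A.Nonempty ∧ Disjoint A C ∧ (G.induce A).Connected ∧
  ∀ u ∈ A, ∀ v, v ∉ A → v ∉ C → ¬ G.Adj u v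

/-!
Inside a cluster `S`, every vertex is joined in `H` to one of at most two representatives of the
parent set, and these representatives are within `H`-distance 3 of each other, except when no
`G`-edge joins the two halves of `S`; then a `G`-walk inside `S` cannot switch halves. So two
vertices joined by a walk inside a cluster are at `H`-distance at most 5. An edge within a level
is such a walk. From an edge `xy` with `y` one level closer to `r`, the vertex `x` reaches in at
most 3 steps of `H` a representative `w` of the component of the parent set containing `y`; `w`
and `y` are joined by a walk inside that component, which lies in the cluster of `y`, so they are
at `H`-distance at most 5. This gives 8.
-/
section Walks

variable {G : SimpleGraph V} {A B : Set V} {u v w : V}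

lemma exists_walk_of_reachable_induce {a b : A} (h : (G.induce A).Reachable a b) :
    ∃ p : G.Walk a b, ∀ z ∈ p.support, z ∈ A := by
  obtain ⟨p⟩ := h
  induction p with
  | nil => exact ⟨.nil, by simp⟩
  | @cons a c b h p ih =>
    obtain ⟨q, hq⟩ := ih
    exact ⟨.cons (show G.Adj a c from h) q, fun z hz => (List.mem_cons.1 hz).elim (· ▸ a.2) (hq z)⟩

lemma connOutside_iff_exists_walk :
    ConnOutside G B u v ↔ ∃ p : G.Walk u v, ∀ z ∈ p.support, z ∉ B := by
  constructor
  · rintro ⟨hu, hv, h⟩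
    exact exists_walk_of_reachable_induce h
  · rintro ⟨p, hp⟩
    exact ⟨hp u p.start_mem_support, hp v p.end_mem_support, ⟨p.induce Bᶜ hp⟩⟩

lemma ConnOutside.symm (h : ConnOutside G B u v) : ConnOutside G B v u :=
  let ⟨hu, hv, h⟩ := h
  ⟨hv, hu, h.symm⟩

lemma ConnOutside.trans (h₁ : ConnOutside G B u v) (h₂ : ConnOutside G B v w) :
    ConnOutside G B u w :=
  let ⟨hu, _, h₁⟩ := h₁
  let ⟨_, hw, h₂⟩ := h₂
  ⟨hu, hw, h₁.trans h₂⟩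

lemma end_mem_of_walk_of_forall_not_adj {D₁ D₂ : Set V}
    (hD : ∀ c ∈ D₁, ∀ d ∈ D₂, ¬ G.Adj c d) (p : G.Walk u v)
    (hp : ∀ z ∈ p.support, z ∈ D₁ ∪ D₂) (hu : u ∈ D₁) : v ∈ D₁ := by
  induction p with
  | nil => exact hu
  | @cons a c b h p ih =>
    have hc : c ∈ D₁ := (hp c (by simp)).resolve_right (hD a hu c · h)
    exact ih (fun z hz => hp z (by simp [hz])) hc

end Walks

section Layering

variable {G : SimpleGraph V} {r u v x y : V} {k : ℕ} {S : Set V}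

def layerCluster (G : SimpleGraph V) (r v : V) : Set V :=
  {u | G.dist r u = G.dist r v ∧ ConnOutside G {w | G.dist r w < G.dist r v} v u}

lemma mem_layerCluster_self : v ∈ layerCluster G r v :=
  ⟨rfl, connOutside_iff_exists_walk.2 ⟨.nil, by simp⟩⟩

lemma mem_layerCluster_of_adj (hxy : G.Adj x y) (h : G.dist r y = G.dist r x) :
    y ∈ layerCluster G r x :=
  ⟨h, connOutside_iff_exists_walk.2 ⟨hxy.toWalk, by simp [h]⟩⟩

lemma isCluster_layerCluster : IsCluster G r (G.dist r v) (layerCluster G r v) :=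
  ⟨⟨v, mem_layerCluster_self⟩, fun _ hu => hu.1, fun _ ha _ hb => ha.2.symm.trans hb.2,
    fun _ hsub hd hc _ hs => ⟨hd _ hs, hc v (hsub mem_layerCluster_self) _ hs⟩⟩

lemma IsCluster.parentSet_subset_layerCluster (hS : IsCluster G r k S)
    (hy : y ∈ parentSet G r k S) : parentSet G r k S ⊆ layerCluster G r y := by
  obtain ⟨hyk, a, ha, hya⟩ := hy
  rintro p ⟨hpk, b, hb, hpb⟩
  obtain ⟨q, hq⟩ := connOutside_iff_exists_walk.1 (hS.2.2.1 a ha b hb)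
  refine ⟨hpk.trans hyk.symm, connOutside_iff_exists_walk.2 ⟨(q.concat hpb.symm).cons hya, ?_⟩⟩
  intro z hz
  simp only [Walk.support_cons, Walk.support_concat, List.mem_cons, List.mem_append,
    List.not_mem_nil, or_false] at hz
  show ¬ G.dist r z < G.dist r y
  rw [hyk, not_lt]
  rcases hz with rfl | hz | rfl
  · exact hyk.ge
  · exact (Nat.sub_le k 1).trans (not_lt.1 (hq z hz))
  · exact hpk.ge

lemma exists_adj_dist_eq_sub_one (hG : G.Connected) (hv : v ≠ r) :
    ∃ z, G.Adj v z ∧ G.dist r z = G.dist r v - 1 := by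
  obtain ⟨p, hp⟩ := hG.exists_walk_length_eq_dist v r
  cases p with
  | nil => exact absurd rfl hv
  | @cons _ z _ h q =>
    refine ⟨z, h, ?_⟩
    have hq : G.dist r z ≤ q.length := by rw [dist_comm]; exact dist_le q
    rw [Walk.length_cons, dist_comm] at hp
    rcases h.diff_dist_adj (u := r) with h' | h' | h' <;> omega

lemma IsCluster.exists_adj_mem_parentSet (hG : G.Connected) (hS : IsCluster G r k S)
    (hk : 1 ≤ k) (hu : u ∈ S) : ∃ p ∈ parentSet G r k S, G.Adj u p := by
  have hur : u ≠ r := by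
    rintro rfl
    have := hS.2.1 u hu
    rw [dist_self] at this
    omega
  obtain ⟨z, huz, hz⟩ := exists_adj_dist_eq_sub_one hG hur
  rw [hS.2.1 u hu] at hz
  exact ⟨z, ⟨hz, u, hu, huz.symm⟩, huz⟩

end Layering

section ClusterEdges

variable {G H : SimpleGraph V} {S P C₁ C₂ D : Set V} {E : Set (Sym2 V)} {a b w w₁ w₂ x y : V}

lemma adj_of_starEdges_subset (h : starEdges w D ⊆ H.edgeSet) (ha : a ∈ D) : H.Adj a w :=
  h ⟨a, ha, rfl⟩

lemma edist_le_edist_add_two (ha : H.Adj a w₁) (hb : H.Adj b w₂) :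
    H.edist a b ≤ H.edist w₁ w₂ + 2 :=
  calc H.edist a b ≤ H.edist a w₁ + (H.edist w₁ w₂ + H.edist w₂ b) :=
        H.edist_triangle.trans (by gcongr; exact H.edist_triangle)
    _ = H.edist w₁ w₂ + 2 := by
        rw [edist_eq_one_iff_adj.2 ha, edist_eq_one_iff_adj.2 hb.symm]; ring

lemma edist_le_five_of_adj_hubs (ha : H.Adj a w₁ ∨ H.Adj a w₂) (hb : H.Adj b w₁ ∨ H.Adj b w₂)
    (hw : H.edist w₁ w₂ ≤ 3) : H.edist a b ≤ 5 := by
  have key : ∀ {i j}, H.Adj a i → H.Adj b j → H.edist i j ≤ 3 → H.edist a b ≤ 5 :=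
    fun ha hb h => calc
      H.edist a b ≤ H.edist _ _ + 2 := edist_le_edist_add_two ha hb
      _ ≤ 3 + 2 := by gcongr
      _ = 5 := by norm_num
  have hself : ∀ i, H.edist i i ≤ 3 := by simp
  rcases ha with ha | ha <;> rcases hb with hb | hb
  · exact key ha hb (hself _)
  · exact key ha hb hw
  · exact key ha hb (H.edist_comm ▸ hw)
  · exact key ha hb (hself _)

lemma SplitsTwo.mem_Dset_union (hP : SplitsTwo G P C₁ C₂) (hSP : ∀ a ∈ S, ∃ p ∈ P, G.Adj a p)
    (ha : a ∈ S) : a ∈ Dset G S C₁ ∪ Dset G S C₂ := by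
  obtain ⟨p, hp, hap⟩ := hSP a ha
  rw [← hP.1] at hp
  exact hp.imp (fun hp => ⟨ha, p, hp, hap⟩) (fun hp => ⟨ha, p, hp, hap⟩)

lemma ClusterEdges.edist_le_five (hE : ClusterEdges G S P E) (hEH : E ⊆ H.edgeSet)
    (hSP : ∀ a ∈ S, ∃ p ∈ P, G.Adj a p) (p : G.Walk a b) (hp : ∀ z ∈ p.support, z ∈ S) :
    H.edist a b ≤ 5 := by
  have ha := hp a p.start_mem_support
  have hb := hp b p.end_mem_support
  rcases hE with ⟨-, w, -, rfl⟩ | ⟨C₁, C₂, hP, w₁, -, w₂, -, hcase⟩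
  · exact edist_le_five_of_adj_hubs (w₂ := w) (.inl (adj_of_starEdges_subset hEH ha))
      (.inl (adj_of_starEdges_subset hEH hb)) (by simp)
  have hcover := fun z (hz : z ∈ S) => hP.mem_Dset_union hSP hz
  rcases hcase with ⟨-, ⟨hnc, rfl⟩ | ⟨u, hu, v, hv, huv, rfl⟩⟩ | ⟨-, u, ⟨hu₁, hu₂⟩, rfl⟩
  · -- no edge joins the two halves, so `p` never leaves the half it starts in
    rw [Set.union_subset_iff] at hEH
    have hnc' : ∀ c ∈ Dset G S C₂, ∀ d ∈ Dset G S C₁, ¬ G.Adj c d :=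
      fun c hc d hd h => hnc ⟨d, hd, c, hc, h.symm⟩
    rcases hcover a ha with ha₁ | ha₂
    · have hb₁ := end_mem_of_walk_of_forall_not_adj (fun c hc d hd h => hnc ⟨c, hc, d, hd, h⟩)
        p (fun z hz => hcover z (hp z hz)) ha₁
      exact edist_le_five_of_adj_hubs (w₂ := w₁) (.inl (adj_of_starEdges_subset hEH.1 ha₁))
        (.inl (adj_of_starEdges_subset hEH.1 hb₁)) (by simp)
    · have hb₂ := end_mem_of_walk_of_forall_not_adj hnc' p
        (fun z hz => Set.union_comm _ _ ▸ hcover z (hp z hz)) ha₂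
      exact edist_le_five_of_adj_hubs (w₂ := w₂) (.inl (adj_of_starEdges_subset hEH.2 ha₂))
        (.inl (adj_of_starEdges_subset hEH.2 hb₂)) (by simp)
  · simp only [Set.union_subset_iff, Set.singleton_subset_iff] at hEH
    obtain ⟨⟨h₁, h₂⟩, huvH⟩ := hEH
    have hub : ∀ c ∈ S, H.Adj c w₁ ∨ H.Adj c w₂ := fun c hc =>
      (hcover c hc).imp (adj_of_starEdges_subset h₁) (adj_of_starEdges_subset h₂)
    refine edist_le_five_of_adj_hubs (hub a ha) (hub b hb) ?_
    calc H.edist w₁ w₂ ≤ H.edist u v + 2 :=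
          edist_le_edist_add_two (adj_of_starEdges_subset h₁ hu).symm
            (adj_of_starEdges_subset h₂ hv).symm
      _ = 3 := by rw [edist_eq_one_iff_adj.2 huvH]; norm_num
  · simp only [Set.union_subset_iff, Set.singleton_subset_iff] at hEH
    obtain ⟨⟨h₁, h₂⟩, huH⟩ := hEH
    have hub : ∀ c ∈ S, H.Adj c w₁ ∨ H.Adj c w₂ := by
      intro c hc
      by_cases hc₁ : c ∈ Dset G S C₁
      · exact .inl (adj_of_starEdges_subset h₁ hc₁)
      · exact .inr (adj_of_starEdges_subset h₂ ⟨(hcover c hc).resolve_left hc₁, hc₁⟩)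
    refine edist_le_five_of_adj_hubs (hub a ha) (hub b hb) ?_
    calc H.edist w₁ w₂ ≤ H.edist u u + 2 :=
          edist_le_edist_add_two (adj_of_starEdges_subset h₁ hu₁).symm (H.mem_edgeSet.1 huH).symm
      _ ≤ 3 := by rw [edist_self]; norm_num

lemma ClusterEdges.exists_edist_le_three_joined_to_parent (hE : ClusterEdges G S P E)
    (hEH : E ⊆ H.edgeSet) (hx : x ∈ S) (hy : y ∈ P) (hxy : G.Adj x y) :
    ∃ w, H.edist x w ≤ 3 ∧ ∃ p : G.Walk w y, ∀ z ∈ p.support, z ∈ P := by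
  have hjoin : ∀ C ⊆ P, (G.induce C).Connected → y ∈ C → ∀ w ∈ C, H.edist x w ≤ 3 →
      ∃ w, H.edist x w ≤ 3 ∧ ∃ p : G.Walk w y, ∀ z ∈ p.support, z ∈ P := by
    intro C hCP hC hyC w hwC hxw
    obtain ⟨p, hp⟩ := exists_walk_of_reachable_induce (hC.preconnected ⟨w, hwC⟩ ⟨y, hyC⟩)
    exact ⟨w, hxw, p, fun z hz => hCP (hp z hz)⟩
  have one_le_three : (1 : ℕ∞) ≤ 3 := by norm_num
  rcases hE with ⟨hP, w, hw, rfl⟩ | ⟨C₁, C₂, hP, w₁, hw₁, w₂, hw₂, hcase⟩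
  · exact hjoin P subset_rfl hP hy w hw
      ((edist_eq_one_iff_adj.2 (adj_of_starEdges_subset hEH hx)).trans_le one_le_three)
  have hC₁ : C₁ ⊆ P := hP.1 ▸ Set.subset_union_left
  have hC₂ : C₂ ⊆ P := hP.1 ▸ Set.subset_union_right
  rcases (hP.1 ▸ hy : y ∈ C₁ ∪ C₂) with hy₁ | hy₂
  · have h₁ : starEdges w₁ (Dset G S C₁) ⊆ H.edgeSet := by
      rcases hcase with ⟨-, ⟨-, rfl⟩ | ⟨u, -, v, -, -, rfl⟩⟩ | ⟨-, u, -, rfl⟩ <;>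
        exact fun e he => hEH (by simp [he])
    exact hjoin C₁ hC₁ hP.2.2.2.2.1 hy₁ w₁ hw₁ ((edist_eq_one_iff_adj.2
      (adj_of_starEdges_subset h₁ ⟨hx, y, hy₁, hxy⟩)).trans_le one_le_three)
  refine hjoin C₂ hC₂ hP.2.2.2.2.2.1 hy₂ w₂ hw₂ ?_
  have hx₂ : x ∈ Dset G S C₂ := ⟨hx, y, hy₂, hxy⟩
  rcases hcase with ⟨-, hsub⟩ | ⟨-, u, ⟨hu₁, -⟩, rfl⟩
  · have h₂ : starEdges w₂ (Dset G S C₂) ⊆ H.edgeSet := by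
      rcases hsub with ⟨-, rfl⟩ | ⟨u, -, v, -, -, rfl⟩ <;> exact fun e he => hEH (by simp [he])
    rw [edist_eq_one_iff_adj.2 (adj_of_starEdges_subset h₂ hx₂)]
    exact one_le_three
  simp only [Set.union_subset_iff, Set.singleton_subset_iff] at hEH
  obtain ⟨⟨h₁, h₂⟩, huH⟩ := hEH
  by_cases hx₁ : x ∈ Dset G S C₁
  · calc H.edist x w₂ ≤ H.edist w₁ u + 2 :=
          edist_le_edist_add_two (adj_of_starEdges_subset h₁ hx₁) (H.mem_edgeSet.1 huH).symm
      _ = 3 := by rw [edist_eq_one_iff_adj.2 (adj_of_starEdges_subset h₁ hu₁).symm]; norm_num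
  · rw [edist_eq_one_iff_adj.2 (adj_of_starEdges_subset h₂ ⟨hx₂, hx₁⟩)]
    exact one_le_three

end ClusterEdges

section AlgoOutput

variable {G H : SimpleGraph V} {r a b x y : V} {k : ℕ} {S : Set V}

lemma IsAlgoOutput.exists_clusterEdges (hH : IsAlgoOutput G r H) (hk : 1 ≤ k)
    (hS : IsCluster G r k S) :
    ∃ E, ClusterEdges G S (parentSet G r k S) E ∧ E ⊆ H.edgeSet := by
  obtain ⟨f, hf, hE⟩ := hH
  exact ⟨f S, hf S k hk hS, fun e he => hE ▸ Set.mem_biUnion ⟨k, hk, hS⟩ he⟩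

lemma IsAlgoOutput.edist_le_five (hG : G.Connected) (hH : IsAlgoOutput G r H) (hk : 1 ≤ k)
    (hS : IsCluster G r k S) (p : G.Walk a b) (hp : ∀ z ∈ p.support, z ∈ S) :
    H.edist a b ≤ 5 := by
  obtain ⟨E, hE, hEH⟩ := hH.exists_clusterEdges hk hS
  exact hE.edist_le_five hEH (fun _ => hS.exists_adj_mem_parentSet hG hk) p hp

lemma IsAlgoOutput.edist_le_eight_of_adj_of_dist_le (hG : G.Connected)
    (hH : IsAlgoOutput G r H) (hxy : G.Adj x y) (hyx : G.dist r y ≤ G.dist r x) :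
    H.edist x y ≤ 8 := by
  set k := G.dist r x
  have hk : 1 ≤ k := by
    by_contra! hk0
    have hx : r = x := hG.dist_eq_zero_iff.1 (by omega)
    have hy : r = y := hG.dist_eq_zero_iff.1 (by omega)
    exact hxy.ne (hx.symm.trans hy)
  have hS : IsCluster G r k (layerCluster G r x) := isCluster_layerCluster
  by_cases hlevel : G.dist r y = k
  · calc H.edist x y ≤ 5 := hH.edist_le_five hG hk hS hxy.toWalk
          (by simp [mem_layerCluster_self, mem_layerCluster_of_adj hxy hlevel])
      _ ≤ 8 := by norm_num
  have hyk : G.dist r y = k - 1 := by rcases hxy.diff_dist_adj (u := r) with h | h | h <;> omega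
  have hyP : y ∈ parentSet G r k (layerCluster G r x) := ⟨hyk, x, mem_layerCluster_self, hxy.symm⟩
  obtain ⟨E, hE, hEH⟩ := hH.exists_clusterEdges hk hS
  obtain ⟨w, hxw, p, hp⟩ :=
    hE.exists_edist_le_three_joined_to_parent hEH mem_layerCluster_self hyP hxy
  have hwy : H.edist w y ≤ 5 := by
    by_cases hk1 : k = 1
    · -- the parent set of a level-1 cluster is `{r}`
      have hw : r = w := hG.dist_eq_zero_iff.1 (by rw [(hp w p.start_mem_support).1]; omega)
      have hy : r = y := hG.dist_eq_zero_iff.1 (by omega)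
      simp [← hw, ← hy]
    exact hH.edist_le_five hG (by omega) isCluster_layerCluster p
      (fun z hz => hS.parentSet_subset_layerCluster hyP (hp z hz))
  calc H.edist x y ≤ H.edist x w + H.edist w y := H.edist_triangle
    _ ≤ 3 + 5 := by gcongr
    _ = 8 := by norm_num

end AlgoOutput

theorem stmt11_general {V : Type} (G : SimpleGraph V) (hG : G.Connected)
    (r : V) (H : SimpleGraph V) (hH : IsAlgoOutput G r H)
    (x y : V) (hxy : G.Adj x y) :
    H.dist x y ≤ 16 := by
  have hedist : H.edist x y ≤ 8 := by
    rcases le_total (G.dist r y) (G.dist r x) with h | h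
    · exact hH.edist_le_eight_of_adj_of_dist_le hG hxy h
    · exact H.edist_comm ▸ hH.edist_le_eight_of_adj_of_dist_le hG hxy.symm h
  calc H.dist x y ≤ (8 : ℕ∞).toNat := ENat.toNat_le_toNat hedist (by decide)
    _ ≤ 16 := by decide

theorem stmt11 {V : Type} [Fintype V] (G : SimpleGraph V) (hG : G.Connected)
    (hfree : K23Free G) (r : V) (H : SimpleGraph V) (hH : IsAlgoOutput G r H)
    (x y : V) (hxy : G.Adj x y) :
    H.dist x y ≤ 16 :=
  stmt11_general G hG r H hH x y hxy

end Paper
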